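/- arXiv:2105.07670 — 3 statements merged into one kernel-verified Lean document; each statement's English description precedes it below -/
import Mathlib

section
/- Let F ∈ L[X] be a polynomial of degree at most d ≥ 1, let A ≤ B be integers, D = B − A, M = max{|A|, |B|}, and let x_1, …, x_{d+1} be distinct integers in [A, B]. If H ≥ 0 is such that h(F(x_i)) ≤ H for every 1 ≤ i ≤ d+1, then h(F) ≤ (d+1)·H + D·log(D) + d·log(2M) + log(d+1). -/
open NumberField Polynomial IsDedekindDomain Nat
open scoped Classical

/-- The integer-valued `𝔭`-adic valuation on a number field `L`, normalized so that a
uniformizer has valuation `1` (with the junk value `0` at `x = 0`). -/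
noncomputable def intValOn {L : Type*} [Field L] [NumberField L]
    (v : HeightOneSpectrum (𝓞 L)) (x : L) : ℤ :=
  if h : x = 0 then 0
  else -Multiplicative.toAdd (WithZero.unzero ((v.valuation L).ne_zero_iff.mpr h))

/-- The normalized `𝔭`-adic absolute value `‖x‖_𝔭 = (N𝔭)^{-v_𝔭(x)}`, i.e. the `d_v`-th power
`|x|_v^{d_v}` of the absolute value `|·|_v` normalized by `|p|_v = 1/p`
(where `d_v = [L_v : ℚ_p]` is the local degree); thus for every `x ∈ L`,
`log (finAbs v x) = d_v · log |x|_v`. -/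
noncomputable def finAbs {L : Type*} [Field L] [NumberField L]
    (v : HeightOneSpectrum (𝓞 L)) (x : L) : ℝ :=
  if x = 0 then 0 else (Ideal.absNorm v.asIdeal : ℝ) ^ (-(intValOn v x))

/-- `|P|_v = max_i |a_i|_v` for `P = Σ_i a_i X^i` and `v` an absolute value on `L`. -/
noncomputable def polyNorm {L : Type*} [Field L] (v : L → ℝ) (P : L[X]) : ℝ :=
  ⨆ i, v (P.coeff i)

/-- The absolute logarithmic Weil height `h(x) = Σ_v (d_v/d_L) log max{1, |x|_v}` of `x ∈ L`:
the finite-place part is written using `finAbs` (recall `log (finAbs v x) = d_v log |x|_v`),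
and for an infinite place `v`, `d_v` is `InfinitePlace.mult v`. -/
noncomputable def elemHeight {L : Type*} [Field L] [NumberField L] (x : L) : ℝ :=
  (1 / (Module.finrank ℚ L : ℝ)) *
    ((∑ᶠ v : HeightOneSpectrum (𝓞 L), Real.log (max 1 (finAbs v x))) +
      ∑ v : InfinitePlace L, (v.mult : ℝ) * Real.log (max 1 (v x)))

/-- The height `h(P) = Σ_v (d_v/d_L) log max{1, |P|_v}` of a polynomial `P ∈ L[X]`. -/
noncomputable def polyHeight {L : Type*} [Field L] [NumberField L] (P : L[X]) : ℝ :=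
  (1 / (Module.finrank ℚ L : ℝ)) *
    ((∑ᶠ v : HeightOneSpectrum (𝓞 L), Real.log (max 1 (polyNorm (finAbs v) P))) +
      ∑ v : InfinitePlace L, (v.mult : ℝ) * Real.log (max 1 (polyNorm (⇑v) P)))

/-- The projective height `Σ_v (d_v/d_L) log max_c |c|_v` of the coefficient tuple of a pair of
polynomials `(P, Q)` (not both zero); for `P, Q` coprime with `F = P/Q` this is the height
`h(F)` of the rational fraction `F`, independent of the chosen representation. -/
noncomputable def pairHeight {L : Type*} [Field L] [NumberField L] (P Q : L[X]) : ℝ :=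
  (1 / (Module.finrank ℚ L : ℝ)) *
    ((∑ᶠ v : HeightOneSpectrum (𝓞 L),
        Real.log (max (polyNorm (finAbs v) P) (polyNorm (finAbs v) Q))) +
      ∑ v : InfinitePlace L, (v.mult : ℝ) *
        Real.log (max (polyNorm (⇑v) P) (polyNorm (⇑v) Q)))

/-- `h°(x) = (1/d_L) log |N_{L/ℚ}(x)|` for a nonzero algebraic integer `x`. -/
noncomputable def normHeight {L : Type*} [Field L] [NumberField L] (x : 𝓞 L) : ℝ :=
  (1 / (Module.finrank ℚ L : ℝ)) * Real.log |(Algebra.norm ℤ x : ℝ)|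

/-!
Lagrange interpolation at the nodes `xᵢ` writes every coefficient of `F` as
`∑ᵢ F(xᵢ) · δᵢ⁻¹ · cᵢₖ`, where `δᵢ = ∏_{j ≠ i} (xᵢ - xⱼ)` and the `cᵢₖ` are the integer
coefficients of `∏_{j ≠ i} (X - xⱼ)`. At a finite place `v` we have `|cᵢₖ|_v ≤ 1` and every `δᵢ`
divides `D!`, so `|F|_v ≤ |D!|_v⁻¹ ∏ᵢ max(1, |F(xᵢ)|_v)`; by the product formula the factors
`|D!|_v⁻¹` contribute `log D! ≤ D log D` to the height. At an infinite place `|δᵢ| ≥ 1` and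
`|cᵢₖ| ≤ ∏_{j ≠ i} (1 + |xⱼ|) ≤ (2M)^d`, so `|F|_v ≤ (d + 1) (2M)^d ∏ᵢ max(1, |F(xᵢ)|_v)`.
Taking logarithms and summing over all places with weights `d_v / d_L` gives the bound.
-/

open Finset Lagrange

section Interpolation

variable {K ι : Type*} [Field K] [DecidableEq ι] {s : Finset ι}

theorem Lagrange.coeff_eq_sum_eval_mul_nodalWeight {v : ι → K} (hvs : Set.InjOn v s) {P : K[X]}
    (hP : P.degree < #s) (k : ℕ) :
    P.coeff k = ∑ i ∈ s, P.eval (v i) * nodalWeight s v i * (nodal (s.erase i) v).coeff k := by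
  nth_rewrite 1 [eq_interpolate hvs hP]
  rw [interpolate_apply, finsetSum_coeff]
  refine sum_congr rfl fun i hi => ?_
  rw [basis_eq_prod_sub_inv_mul_nodal_div hi, ← nodal_erase_eq_nodal_div hi, coeff_C_mul,
    coeff_C_mul, mul_assoc]

theorem Lagrange.coeff_eq_sum_eval_intCast [CharZero K] {x : ι → ℤ} (hx : Set.InjOn x s)
    {P : K[X]} (hP : P.degree < #s) (k : ℕ) :
    P.coeff k = ∑ i ∈ s, P.eval (x i : K) * ((∏ j ∈ s.erase i, (x i - x j) : ℤ) : K)⁻¹ *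
      ((nodal (s.erase i) x).coeff k : K) := by
  rw [coeff_eq_sum_eval_mul_nodalWeight ((Int.cast_injective (α := K)).comp_injOn hx) hP]
  refine sum_congr rfl fun i _ => ?_
  have hnodal : nodal (s.erase i) (Int.cast ∘ x) =
      (nodal (s.erase i) x).map (Int.castRingHom K) := by
    simp [nodal, Polynomial.map_prod]
  rw [hnodal, coeff_map]
  simp [nodalWeight, prod_inv_distrib]

end Interpolation

section IntegerNodes

variable {ι : Type*}

theorem Lagrange.abs_coeff_nodal_le {R : Type*} [CommRing R] [LinearOrder R]
    [IsStrictOrderedRing R] (s : Finset ι) (c : ι → R) (k : ℕ) :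
    |(nodal s c).coeff k| ≤ ∏ j ∈ s, (1 + |c j|) := by
  induction s using Finset.cons_induction generalizing k with
  | empty => rcases k with _ | k <;> simp [coeff_one]
  | cons i s hi ih =>
    rw [nodal_eq, prod_cons, ← nodal_eq, prod_cons]
    rcases k with _ | k
    · rw [mul_coeff_zero, coeff_sub, coeff_X_zero, coeff_C_zero, zero_sub, abs_mul, abs_neg]
      nlinarith [ih 0, abs_nonneg (c i), abs_nonneg ((nodal s c).coeff 0)]
    · rw [coeff_X_sub_C_mul]
      calc _ ≤ |(nodal s c).coeff k| + |c i| * |(nodal s c).coeff (k + 1)| := by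
            rw [← abs_mul]; exact abs_sub _ _
        _ ≤ ∏ j ∈ s, (1 + |c j|) + |c i| * ∏ j ∈ s, (1 + |c j|) := by
            gcongr
            exacts [ih k, ih (k + 1)]
        _ = _ := by ring

theorem Lagrange.abs_coeff_nodal_le_pow {R : Type*} [CommRing R] [LinearOrder R]
    [IsStrictOrderedRing R] {s : Finset ι} {c : ι → R} {C : R} (hC : ∀ j ∈ s, 1 + |c j| ≤ C)
    (k : ℕ) : |(nodal s c).coeff k| ≤ C ^ #s :=
  (abs_coeff_nodal_le s c k).trans <|
    (prod_le_prod (fun _ _ => by positivity) hC).trans_eq (prod_const C)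

theorem prod_dvd_factorial_of_injOn {s : Finset ι} {f : ι → ℕ} {a : ℕ} (hf : Set.InjOn f s)
    (hmem : ∀ j ∈ s, f j ∈ Icc 1 a) : ∏ j ∈ s, f j ∣ a ! :=
  calc ∏ j ∈ s, f j = ∏ m ∈ s.image f, m := (prod_image (f := fun m => m) hf).symm
    _ ∣ ∏ m ∈ Icc 1 a, m := prod_dvd_prod_of_subset _ _ _ (image_subset_iff.2 hmem)
    _ = a ! := by rw [← Finset.Ico_add_one_right_eq_Icc, prod_Ico_id_eq_factorial]

theorem prod_natAbs_sub_dvd_factorial {s : Finset ι} {x : ι → ℤ} (hx : Set.InjOn x s) {A c : ℤ}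
    (hA : ∀ j ∈ s, A ≤ x j) : ∏ j ∈ s with x j < c, (c - x j).natAbs ∣ (c - A).toNat ! := by
  refine prod_dvd_factorial_of_injOn (fun j hj k hk h => ?_) fun j hj => ?_
  · simp only [coe_filter, Set.mem_ofPred_eq] at hj hk
    exact hx hj.1 hk.1 (by omega)
  · simp only [mem_filter] at hj
    have := hA j hj.1
    simp only [mem_Icc]
    omega

/- The differences `x i - x j` with `x j < x i` are distinct integers in `[1, x i - A]`, the others
are, up to sign, distinct integers in `[1, B - x i]`; and `a! b! ∣ (a + b)!`. -/
theorem prod_erase_sub_dvd_factorial [DecidableEq ι] {s : Finset ι} {x : ι → ℤ}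
    (hx : Set.InjOn x s) {A B : ℤ} (hAB : ∀ j ∈ s, x j ∈ Set.Icc A B) {i : ι} (hi : i ∈ s) :
    ∏ j ∈ s.erase i, (x i - x j) ∣ ((B - A).toNat ! : ℤ) := by
  have hxi := hAB i hi
  have hsplit : (B - A).toNat = (x i - A).toNat + (-x i - -B).toNat := by
    simp only [Set.mem_Icc] at hxi; omega
  have hx' : Set.InjOn x (s.erase i) := hx.mono (erase_subset i s)
  have hAB' (j) (hj : j ∈ s.erase i) := hAB j (mem_of_mem_erase hj)
  have hprod : (∏ j ∈ s.erase i, (x i - x j)).natAbs = ∏ j ∈ s.erase i, (x i - x j).natAbs :=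
    map_prod Int.natAbsHom _ _
  rw [← Int.natAbs_dvd_natAbs, hprod, Int.natAbs_natCast, hsplit,
    ← prod_filter_mul_prod_filter_not (s.erase i) (fun j => x j < x i)]
  refine (mul_dvd_mul ?_ ?_).trans (Nat.factorial_mul_factorial_dvd_factorial_add _ _)
  · exact prod_natAbs_sub_dvd_factorial hx' fun j hj => (hAB' j hj).1
  · have hfilter : (s.erase i).filter (fun j => ¬x j < x i) =
        (s.erase i).filter (fun j => -x j < -x i) := filter_congr fun j hj => by
      have := hx.ne (mem_of_mem_erase hj) hi (ne_of_mem_erase hj)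
      omega
    rw [hfilter]
    refine (dvd_of_eq (prod_congr rfl fun j _ => ?_)).trans
      (prod_natAbs_sub_dvd_factorial (x := fun j => -x j) (neg_injective.comp_injOn hx')
        fun j hj => neg_le_neg (hAB' j hj).2)
    omega

end IntegerNodes

section PlaceBounds

theorem Function.HasFiniteMulSupport.log {α : Type*} {f : α → ℝ} (hf : f.HasFiniteMulSupport) :
    (fun a => Real.log (f a)).HasFiniteSupport :=
  hf.subset <| Function.support_subset_iff'.2 fun a ha => by
    rw [Function.notMem_mulSupport.1 ha, Real.log_one]

theorem Function.HasFiniteSupport.of_nonneg_of_le {α : Type*} {f g : α → ℝ}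
    (hg : g.HasFiniteSupport) (hf : 0 ≤ f) (hfg : f ≤ g) : f.HasFiniteSupport :=
  hg.subset fun a ha => (((hf a).lt_of_ne' ha).trans_le (hfg a)).ne'

theorem Real.log_factorial_le_mul_log (n : ℕ) : Real.log (n ! : ℕ) ≤ n * Real.log n := by
  rw [← Real.log_pow]
  exact Real.log_le_log (by positivity) (mod_cast Nat.factorial_le_pow n)

variable {ι : Type*} {s : Finset ι}

theorem Real.log_max_one_le_sum_add_log {a c : ℝ} {b : ι → ℝ} (hc : 1 ≤ c)
    (h : a ≤ c * ∏ i ∈ s, max 1 (b i)) :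
    Real.log (max 1 a) ≤ ∑ i ∈ s, Real.log (max 1 (b i)) + Real.log c := by
  have hprod : 1 ≤ ∏ i ∈ s, max 1 (b i) := one_le_prod fun _ _ => le_max_left _ _
  calc Real.log (max 1 a) ≤ Real.log (c * ∏ i ∈ s, max 1 (b i)) :=
        Real.log_le_log (by positivity) (max_le (one_le_mul_of_one_le_of_one_le hc hprod) h)
    _ = _ := by
        rw [Real.log_mul (by positivity) (by positivity), Real.log_prod fun _ _ => by positivity,
          add_comm]

variable {K : Type*} [Field K]

theorem IsNonarchimedean.apply_sum_le_of_forall_le {abv : AbsoluteValue K ℝ}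
    (hna : IsNonarchimedean abv) {f : ι → K} {c : ℝ} (hc : 0 ≤ c)
    (h : ∀ i ∈ s, abv (f i) ≤ c) : abv (∑ i ∈ s, f i) ≤ c := by
  rcases s.eq_empty_or_nonempty with rfl | hs
  · simpa using hc
  · exact (hna.apply_sum_le_sup hs).trans (sup'_le hs _ h)

variable [CharZero K] [DecidableEq ι] {x : ι → ℤ} {abv : AbsoluteValue K ℝ} {P : K[X]}

theorem polyNorm_le_of_isNonarchimedean (hna : IsNonarchimedean abv) (hx : Set.InjOn x s)
    (hP : P.degree < #s) {N : ℤ} (hN : N ≠ 0)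
    (hdvd : ∀ i ∈ s, ∏ j ∈ s.erase i, (x i - x j) ∣ N) :
    polyNorm abv P ≤ (abv N)⁻¹ * ∏ i ∈ s, max 1 (abv (P.eval (x i : K))) := by
  have hN0 : 0 < abv (N : K) := abv.pos (Int.cast_ne_zero.2 hN)
  refine ciSup_le fun k => ?_
  rw [coeff_eq_sum_eval_intCast hx hP k]
  refine hna.apply_sum_le_of_forall_le (by positivity) fun i hi => ?_
  obtain ⟨c, hc⟩ := hdvd i hi
  have hden : abv N ≤ abv (∏ j ∈ s.erase i, (x i - x j) : ℤ) := by
    rw [hc, Int.cast_mul, map_mul]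
    exact mul_le_of_le_one_right (abv.nonneg _) hna.apply_intCast_le_one
  rw [map_mul, map_mul, map_inv₀, mul_right_comm]
  calc _ ≤ (∏ j ∈ s, max 1 (abv (P.eval (x j : K)))) * 1 * (abv N)⁻¹ := by
        gcongr
        · simpa only [max_comm] using le_prod_max_one hi fun j => abv (P.eval (x j : K))
        · exact hna.apply_intCast_le_one
    _ = _ := by ring

theorem polyNorm_le_of_abv_intCast (habv : ∀ n : ℤ, abv n = |(n : ℝ)|) (hx : Set.InjOn x s)
    (hP : P.degree < #s) {C : ℝ} (hC : ∀ i ∈ s, ∀ k, |((nodal (s.erase i) x).coeff k : ℝ)| ≤ C) :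
    polyNorm abv P ≤ #s * C * ∏ i ∈ s, max 1 (abv (P.eval (x i : K))) := by
  refine ciSup_le fun k => ?_
  rw [coeff_eq_sum_eval_intCast hx hP k]
  refine (abv.sum_le _ _).trans ?_
  calc _ ≤ ∑ i ∈ s, (∏ j ∈ s, max 1 (abv (P.eval (x j : K)))) * 1 * C := by
        refine sum_le_sum fun i hi => ?_
        have hden : 1 ≤ abv (∏ j ∈ s.erase i, (x i - x j) : ℤ) := by
          rw [habv]
          refine mod_cast Int.one_le_abs (prod_ne_zero_iff.2 fun j hj => sub_ne_zero.2 ?_)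
          exact fun h => (ne_of_mem_erase hj) (hx (mem_of_mem_erase hj) hi h.symm)
        rw [map_mul, map_mul, map_inv₀, habv ((nodal _ x).coeff k)]
        gcongr
        · simpa only [max_comm] using le_prod_max_one hi fun j => abv (P.eval (x j : K))
        · exact inv_le_one_of_one_le₀ hden
        · exact hC i hi k
    _ = _ := by rw [sum_const, nsmul_eq_mul]; ring

end PlaceBounds

namespace NumberField

variable {L : Type*} [Field L] [NumberField L]

theorem finAbs_eq_finitePlace_mk (v : HeightOneSpectrum (𝓞 L)) :
    finAbs v = ⇑(FinitePlace.mk v) := by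
  ext x
  rw [FinitePlace.mk_apply, FinitePlace.norm_embedding, HeightOneSpectrum.adicAbv_def]
  by_cases hx : x = 0
  · simp [finAbs, hx]
  · rw [WithZeroMulInt.toNNReal_neg_apply _ ((v.valuation L).ne_zero_iff.mpr hx)]
    simp [finAbs, intValOn, hx]

theorem finsum_comp_finAbs (f : (L → ℝ) → ℝ) :
    ∑ᶠ v : HeightOneSpectrum (𝓞 L), f (finAbs v) = ∑ᶠ w : FinitePlace L, f ⇑w := by
  simp_rw [finAbs_eq_finitePlace_mk]
  exact finsum_comp_equiv FinitePlace.equivHeightOneSpectrum.symm (f := fun w => f ⇑w)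

theorem FinitePlace.hasFiniteSupport_log_max_one (y : L) :
    (fun w : FinitePlace L => Real.log (max 1 (w y))).HasFiniteSupport := by
  rcases eq_or_ne y 0 with rfl | hy
  · simp [Function.HasFiniteSupport]
  · exact (Function.hasFiniteMulSupport_fun_one.max (FinitePlace.hasFiniteMulSupport hy)).log

theorem FinitePlace.finsum_log_intCast {N : ℤ} (hN : N ≠ 0) :
    ∑ᶠ w : FinitePlace L, Real.log (w N) = -(Module.finrank ℚ L * Real.log |N|) := by
  have hNL : (N : L) ≠ 0 := Int.cast_ne_zero.2 hN
  rw [← Real.log_finprod fun _ => FinitePlace.pos_iff.2 hNL,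
    FinitePlace.prod_eq_inv_abs_norm hNL, ← map_intCast (algebraMap ℚ L) N, Algebra.norm_algebraMap]
  simp [Real.log_inv, Real.log_pow]

theorem elemHeight_eq (y : L) : elemHeight y = (1 / (Module.finrank ℚ L : ℝ)) *
    ((∑ᶠ w : FinitePlace L, Real.log (max 1 (w y))) +
      ∑ w : InfinitePlace L, (w.mult : ℝ) * Real.log (max 1 (w y))) := by
  rw [elemHeight, finsum_comp_finAbs fun f => Real.log (max 1 (f y))]

theorem polyHeight_eq (P : L[X]) : polyHeight P = (1 / (Module.finrank ℚ L : ℝ)) *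
    ((∑ᶠ w : FinitePlace L, Real.log (max 1 (polyNorm w P))) +
      ∑ w : InfinitePlace L, (w.mult : ℝ) * Real.log (max 1 (polyNorm w P))) := by
  rw [polyHeight, finsum_comp_finAbs fun f => Real.log (max 1 (polyNorm f P))]

variable {ι : Type*} [DecidableEq ι] {s : Finset ι} {x : ι → ℤ} {P : L[X]}

theorem finsum_log_polyNorm_le (hx : Set.InjOn x s) (hP : P.degree < #s) {N : ℤ} (hN : N ≠ 0)
    (hdvd : ∀ i ∈ s, ∏ j ∈ s.erase i, (x i - x j) ∣ N) :
    ∑ᶠ w : FinitePlace L, Real.log (max 1 (polyNorm w P)) ≤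
      ∑ i ∈ s, ∑ᶠ w : FinitePlace L, Real.log (max 1 (w (P.eval (x i : L)))) +
        Module.finrank ℚ L * Real.log |N| := by
  have hNL : (N : L) ≠ 0 := Int.cast_ne_zero.2 hN
  have hplace (w : FinitePlace L) : Real.log (max 1 (polyNorm w P)) ≤
      ∑ i ∈ s, Real.log (max 1 (w (P.eval (x i : L)))) + -Real.log (w N) := by
    have hna : IsNonarchimedean w.val := FinitePlace.add_le w
    rw [← Real.log_inv]
    exact Real.log_max_one_le_sum_add_log
      ((one_le_inv₀ (FinitePlace.pos_iff.2 hNL)).2 hna.apply_intCast_le_one)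
      (polyNorm_le_of_isNonarchimedean hna hx hP hN hdvd)
  have hfin (i : ι) := FinitePlace.hasFiniteSupport_log_max_one (P.eval (x i : L))
  have hfinN : (fun w : FinitePlace L => -Real.log (w N)).HasFiniteSupport :=
    (FinitePlace.hasFiniteMulSupport hNL).log.neg
  have hrhs : (fun w : FinitePlace L =>
      ∑ i ∈ s, Real.log (max 1 (w (P.eval (x i : L)))) + -Real.log (w N)).HasFiniteSupport :=
    (Function.HasFiniteSupport.sum (fun i => hfin i) s).add hfinN
  calc _ ≤ ∑ᶠ w : FinitePlace L,
        (∑ i ∈ s, Real.log (max 1 (w (P.eval (x i : L)))) + -Real.log (w N)) :=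
        finsum_le_finsum'
          (hrhs.of_nonneg_of_le (fun w => Real.log_nonneg (le_max_left _ _)) hplace) hrhs hplace
    _ = _ := by
        rw [finsum_add_distrib (Function.HasFiniteSupport.sum (fun i => hfin i) s) hfinN,
          finsum_sum_comm s _ fun i _ => hfin i, finsum_neg_distrib,
          FinitePlace.finsum_log_intCast hN, neg_neg]

theorem sum_mult_log_polyNorm_le (hx : Set.InjOn x s) (hP : P.degree < #s) (hs : s.Nonempty)
    {C : ℝ} (hC1 : 1 ≤ C) (hC : ∀ i ∈ s, ∀ k, |((nodal (s.erase i) x).coeff k : ℝ)| ≤ C) :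
    ∑ w : InfinitePlace L, (w.mult : ℝ) * Real.log (max 1 (polyNorm w P)) ≤
      ∑ i ∈ s, ∑ w : InfinitePlace L, (w.mult : ℝ) * Real.log (max 1 (w (P.eval (x i : L)))) +
        Module.finrank ℚ L * Real.log (#s * C) := by
  have hplace (w : InfinitePlace L) : Real.log (max 1 (polyNorm w P)) ≤
      ∑ i ∈ s, Real.log (max 1 (w (P.eval (x i : L)))) + Real.log (#s * C) :=
    Real.log_max_one_le_sum_add_log
      (one_le_mul_of_one_le_of_one_le (mod_cast hs.card_pos) hC1)
      (polyNorm_le_of_abv_intCast (abv := w.val)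
        (fun n => (w.map_intCast n).trans (Int.norm_eq_abs n)) hx hP hC)
  calc _ ≤ ∑ w : InfinitePlace L, (w.mult : ℝ) *
        (∑ i ∈ s, Real.log (max 1 (w (P.eval (x i : L)))) + Real.log (#s * C)) :=
        sum_le_sum fun w _ => mul_le_mul_of_nonneg_left (hplace w) (Nat.cast_nonneg _)
    _ = _ := by
        simp_rw [mul_add, mul_sum, sum_add_distrib, ← sum_mul]
        rw [sum_comm, ← Nat.cast_sum, InfinitePlace.sum_mult_eq]

theorem polyHeight_le_sum_elemHeight_add (hx : Set.InjOn x s) (hP : P.degree < #s)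
    (hs : s.Nonempty) {N : ℤ} (hN : N ≠ 0) (hdvd : ∀ i ∈ s, ∏ j ∈ s.erase i, (x i - x j) ∣ N)
    {C : ℝ} (hC1 : 1 ≤ C) (hC : ∀ i ∈ s, ∀ k, |((nodal (s.erase i) x).coeff k : ℝ)| ≤ C) :
    polyHeight P ≤
      ∑ i ∈ s, elemHeight (P.eval (x i : L)) + Real.log |N| + Real.log (#s * C) := by
  have hn : (0 : ℝ) < Module.finrank ℚ L := mod_cast Module.finrank_pos
  have hfin := finsum_log_polyNorm_le hx hP hN hdvd
  have hinf := sum_mult_log_polyNorm_le hx hP hs hC1 hC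
  simp_rw [polyHeight_eq, elemHeight_eq, ← mul_sum, sum_add_distrib]
  calc _ ≤ 1 / (Module.finrank ℚ L : ℝ) * ((∑ i ∈ s, ∑ᶠ w : FinitePlace L,
        Real.log (max 1 (w (P.eval (x i : L)))) + ∑ i ∈ s, ∑ w : InfinitePlace L,
        (w.mult : ℝ) * Real.log (max 1 (w (P.eval (x i : L))))) +
          Module.finrank ℚ L * (Real.log |N| + Real.log (#s * C))) :=
        mul_le_mul_of_nonneg_left (by linarith) (by positivity)
    _ = _ := by field_simp; ring

end NumberField

theorem stmt_2_general {L : Type*} [Field L] [NumberField L]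
    (d : ℕ) (hd : 1 ≤ d) (F : L[X]) (hdeg : F.natDegree ≤ d)
    (A B : ℤ) (D : ℕ) (hD : (D : ℤ) = B - A) (M : ℤ) (hM : M = max |A| |B|)
    (x : Fin (d + 1) → ℤ) (hinj : Function.Injective x) (hx : ∀ i, x i ∈ Set.Icc A B)
    (H : ℝ)
    (hFx : ∀ i, elemHeight (F.eval ((x i : ℤ) : L)) ≤ H) :
    polyHeight F ≤ ((d : ℝ) + 1) * H + (D : ℝ) * Real.log (D : ℝ)
      + (d : ℝ) * Real.log (2 * (M : ℝ)) + Real.log ((d : ℝ) + 1) := by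
  have hxM (i : Fin (d + 1)) : |x i| ≤ M := hM ▸ abs_le_max_abs_abs (hx i).1 (hx i).2
  have hM1 : 1 ≤ M := by
    have h01 := hinj.ne (a₁ := ⟨0, by omega⟩) (a₂ := ⟨1, by omega⟩) (by simp)
    have := abs_le.1 (hxM ⟨0, by omega⟩); have := abs_le.1 (hxM ⟨1, by omega⟩)
    omega
  have hC (i : Fin (d + 1)) (_ : i ∈ univ) (k : ℕ) :
      |((nodal (univ.erase i) x).coeff k : ℝ)| ≤ (2 * M : ℝ) ^ d := by
    have := abs_coeff_nodal_le_pow (s := univ.erase i) (c := x) (C := 2 * M) (fun j _ => by linarith [hxM j]) k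
    rw [card_erase_of_mem (mem_univ i), Finset.card_univ, Fintype.card_fin,
      Nat.add_sub_cancel] at this
    exact_mod_cast this
  have hdvd (i : Fin (d + 1)) (hi : i ∈ univ) :
      ∏ j ∈ univ.erase i, (x i - x j) ∣ ((D ! : ℕ) : ℤ) := by
    simpa [show (B - A).toNat = D by omega] using
      prod_erase_sub_dvd_factorial hinj.injOn (fun j _ => hx j) hi
  have hdeg' : F.degree < #(univ : Finset (Fin (d + 1))) := by
    simpa using degree_le_natDegree.trans_lt (mod_cast Nat.lt_succ_of_le hdeg)
  have key := polyHeight_le_sum_elemHeight_add hinj.injOn hdeg' univ_nonempty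
    (Nat.cast_ne_zero.2 (factorial_ne_zero D)) hdvd (one_le_pow₀ (by norm_cast; omega)) hC
  have hvalues : ∑ i, elemHeight (F.eval (x i : L)) ≤ ((d : ℝ) + 1) * H := by
    simpa using sum_le_sum fun i (_ : i ∈ univ) => hFx i
  have hlog : Real.log (#(univ : Finset (Fin (d + 1))) * (2 * M : ℝ) ^ d) =
      Real.log ((d : ℝ) + 1) + d * Real.log (2 * M) := by
    rw [Finset.card_univ, Fintype.card_fin, Real.log_mul (by positivity) (by positivity),
      Real.log_pow]
    push_cast; ring
  rw [Int.cast_natCast, Nat.abs_cast] at key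
  linarith [Real.log_factorial_le_mul_log D]

/-- Let `F ∈ L[X]` of degree at most `d ≥ 1`, let `x 0, …, x d` be distinct
integers in `[A, B]`, `D = B − A`, `M = max{|A|, |B|}`. If `H ≥ 0` and `h(F(x_i)) ≤ H` for all
`i`, then `h(F) ≤ (d+1)·H + D·log D + d·log(2M) + log(d+1)`. -/
theorem stmt_2 {L : Type*} [Field L] [NumberField L]
    (d : ℕ) (hd : 1 ≤ d) (F : L[X]) (hdeg : F.natDegree ≤ d)
    (A B : ℤ) (hAB : A ≤ B) (D : ℕ) (hD : (D : ℤ) = B - A) (M : ℤ) (hM : M = max |A| |B|)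
    (x : Fin (d + 1) → ℤ) (hinj : Function.Injective x) (hx : ∀ i, x i ∈ Set.Icc A B)
    (H : ℝ) (hH : 0 ≤ H)
    (hFx : ∀ i, elemHeight (F.eval ((x i : ℤ) : L)) ≤ H) :
    polyHeight F ≤ ((d : ℝ) + 1) * H + (D : ℝ) * Real.log (D : ℝ)
      + (d : ℝ) * Real.log (2 * (M : ℝ)) + Real.log ((d : ℝ) + 1) :=
  stmt_2_general d hd F hdeg A B D hD M hM x hinj hx H hFx
end

section
/- Let F ∈ L[X] be a polynomial of degree at most d ≥ 1, let A ≤ B be integers with D = B − A, and let v be a finite place of L. Then the number of integers x ∈ [A, B] satisfying |F(x)|_v < |D!|_v · |F|_v is at most d. -/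
open NumberField Polynomial IsDedekindDomain Nat
open scoped Classical

/-! If `d + 1` integers `x₀, …, x_d ∈ [A, B]` satisfied the inequality, Lagrange interpolation
would write `F = ∑ⱼ F(xⱼ) ℓⱼ`. The denominator `∏_{i ≠ j} (xⱼ - xᵢ)` of `ℓⱼ` divides `D!`, and
its numerator has integer coefficients, so `|ℓⱼ|_v ≤ |D!|_v⁻¹`. The ultrametric inequality for
the Gauss norm then gives `|F|_v ≤ maxⱼ |F(xⱼ)|_v |D!|_v⁻¹ < |F|_v`. -/

open Finset in
theorem Nat.prod_dvd_factorial_of_injOn {ι : Type*} {s : Finset ι} {g : ι → ℕ} {M : ℕ}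
    (hg : Set.InjOn g s) (hs : ∀ i ∈ s, g i ∈ Icc 1 M) : ∏ i ∈ s, g i ∣ M ! := by
  calc ∏ i ∈ s, g i = ∏ n ∈ s.image g, n := (prod_image (f := id) hg).symm
    _ ∣ ∏ n ∈ Icc 1 M, n := prod_dvd_prod_of_subset _ _ _ (image_subset_iff.2 hs)
    _ = M ! := by rw [← Ico_add_one_right_eq_Icc, prod_Ico_id_eq_factorial]

open Finset in
/-- The nodes below `j` give distinct differences in `[1, j - A]` and those above `j` distinct
differences in `[1, B - j]`, so the product divides `(j - A)! (B - j)!`, which divides `D!`. -/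
theorem Int.prod_sub_dvd_factorial {T : Finset ℤ} {A B : ℤ} {D : ℕ} (hD : (D : ℤ) = B - A)
    (hT : ∀ x ∈ T, x ∈ Set.Icc A B) {j : ℤ} (hj : j ∈ T) :
    ∏ i ∈ T.erase j, (j - i) ∣ (D ! : ℤ) := by
  rw [← Int.natAbs_dvd_natAbs, Int.natAbs_natCast, ← Int.natAbsHom_apply, map_prod]
  simp only [Int.natAbsHom_apply]
  rw [← prod_filter_mul_prod_filter_not (T.erase j) (· < j)]
  obtain ⟨hAj, hjB⟩ := hT j hj
  have hsum : (j - A).toNat + (B - j).toNat = D := by omega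
  refine (mul_dvd_mul ?_ ?_).trans (hsum ▸ Nat.factorial_mul_factorial_dvd_factorial_add _ _)
  all_goals
    apply Nat.prod_dvd_factorial_of_injOn
    · intro a ha b hb hab
      simp only [coe_filter, mem_erase, Set.mem_ofPred_eq] at ha hb hab
      omega
    · intro i hi
      simp only [mem_filter, mem_erase] at hi
      obtain ⟨hAi, hiB⟩ := hT i hi.1.2
      rw [mem_Icc]
      omega

theorem IsNonarchimedean.apply_intCast_le_of_dvd {L : Type*} [Field L] {f : AbsoluteValue L ℝ}
    (hna : IsNonarchimedean f) {m n : ℤ} (h : m ∣ n) : f n ≤ f m := by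
  obtain ⟨k, rfl⟩ := h
  rw [Int.cast_mul, map_mul]
  exact mul_le_of_le_one_right (f.nonneg _) hna.apply_intCast_le_one

namespace Polynomial

theorem polyNorm_eq_gaussNorm {L F : Type*} [Field L] [FunLike F L ℝ] [ZeroHomClass F L ℝ]
    [NonnegHomClass F L ℝ] (f : F) (P : L[X]) : polyNorm f P = P.gaussNorm f 1 := by
  have hP : IsGreatest (Set.range fun i => f (P.coeff i)) (P.gaussNorm f 1) := by
    refine ⟨?_, ?_⟩
    · obtain ⟨i, hi⟩ := exists_eq_gaussNorm f 1 P
      exact ⟨i, by simp [hi]⟩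
    · rintro _ ⟨i, rfl⟩
      simpa using le_gaussNorm f P zero_le_one i
  exact hP.csSup_eq

variable {L : Type*} [Field L] {f : AbsoluteValue L ℝ}

theorem gaussNorm_map_intCast_le_one (hna : IsNonarchimedean f) (P : ℤ[X]) :
    (P.map (Int.castRingHom L)).gaussNorm f 1 ≤ 1 := by
  obtain ⟨i, hi⟩ := exists_eq_gaussNorm f 1 (P.map (Int.castRingHom L))
  rw [hi, one_pow, mul_one, coeff_map, eq_intCast]
  exact hna.apply_intCast_le_one

theorem lagrangeBasis_intCast_eq (s : Finset ℤ) (j : ℤ) :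
    Lagrange.basis s (Int.cast : ℤ → L) j =
      C ((∏ i ∈ s.erase j, (j - i) : ℤ) : L)⁻¹ *
        (∏ i ∈ s.erase j, (X - C i)).map (Int.castRingHom L) := by
  simp [Lagrange.basis, Lagrange.basisDivisor, Finset.prod_mul_distrib, ← map_prod,
    Polynomial.map_prod]

theorem gaussNorm_lagrangeBasis_intCast_le (hna : IsNonarchimedean f) (s : Finset ℤ) (j : ℤ) :
    (Lagrange.basis s (Int.cast : ℤ → L) j).gaussNorm f 1 ≤
      (f ((∏ i ∈ s.erase j, (j - i) : ℤ) : L))⁻¹ := by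
  rw [lagrangeBasis_intCast_eq, gaussNorm_mul hna one_pos, gaussNorm_C, map_inv₀]
  exact mul_le_of_le_one_right (inv_nonneg.2 (f.nonneg _)) (gaussNorm_map_intCast_le_one hna _)

open Finset in
theorem card_le_natDegree_of_lt_factorial_mul_gaussNorm [CharZero L] (hna : IsNonarchimedean f)
    {F : L[X]} {A B : ℤ} {D : ℕ} (hD : (D : ℤ) = B - A) {T : Finset ℤ}
    (hT : ∀ x ∈ T, x ∈ Set.Icc A B)
    (hlt : ∀ x ∈ T, f (F.eval (x : L)) < f (D ! : L) * F.gaussNorm f 1) :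
    #T ≤ F.natDegree := by
  by_contra! hcard
  have hinterp := Lagrange.eq_interpolate Int.cast_injective.injOn
    (F.degree_le_natDegree.trans_lt (by exact_mod_cast hcard))
  rw [Lagrange.interpolate_apply] at hinterp
  have hT₀ : T.Nonempty := card_pos.1 (by omega)
  obtain ⟨j, hj, hFj⟩ :=
    (isNonarchimedean_gaussNorm f hna zero_le_one).finset_image_add_of_nonempty _ hT₀
  rw [← hinterp, gaussNorm_mul hna one_pos, gaussNorm_C] at hFj
  set Δ : ℤ := ∏ i ∈ T.erase j, (j - i)
  have hΔ : 0 < f Δ := f.pos (Int.cast_ne_zero.2 (prod_ne_zero_iff.2 fun i hi =>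
    sub_ne_zero.2 (ne_of_mem_erase hi).symm))
  have hDΔ : f (D ! : L) ≤ f Δ := by
    simpa only [Int.cast_natCast] using
      hna.apply_intCast_le_of_dvd (Int.prod_sub_dvd_factorial hD hT hj)
  have hF_nonneg := F.gaussNorm_nonneg f zero_le_one
  refine lt_irrefl (F.gaussNorm f 1) ?_
  calc F.gaussNorm f 1
      ≤ f (F.eval (j : L)) * (Lagrange.basis T (Int.cast : ℤ → L) j).gaussNorm f 1 := hFj
    _ ≤ f (F.eval (j : L)) * (f Δ)⁻¹ :=
        mul_le_mul_of_nonneg_left (gaussNorm_lagrangeBasis_intCast_le hna T j) (f.nonneg _)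
    _ < f (D ! : L) * F.gaussNorm f 1 * (f Δ)⁻¹ :=
        mul_lt_mul_of_pos_right (hlt j hj) (inv_pos.2 hΔ)
    _ ≤ F.gaussNorm f 1 := by
        rw [mul_right_comm, ← div_eq_mul_inv]
        exact mul_le_of_le_one_left hF_nonneg ((div_le_one hΔ).2 hDΔ)

theorem ncard_setOf_lt_factorial_mul_gaussNorm_le [CharZero L] (hna : IsNonarchimedean f)
    (F : L[X]) {A B : ℤ} {D : ℕ} (hD : (D : ℤ) = B - A) :
    {x : ℤ | x ∈ Set.Icc A B ∧ f (F.eval (x : L)) < f (D ! : L) * F.gaussNorm f 1}.ncard ≤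
      F.natDegree := by
  have hfin : {x : ℤ | x ∈ Set.Icc A B ∧
      f (F.eval (x : L)) < f (D ! : L) * F.gaussNorm f 1}.Finite :=
    (Set.finite_Icc A B).subset fun x hx => hx.1
  rw [Set.ncard_eq_toFinset_card _ hfin]
  exact card_le_natDegree_of_lt_factorial_mul_gaussNorm hna hD
    (fun x hx => (hfin.mem_toFinset.1 hx).1) (fun x hx => (hfin.mem_toFinset.1 hx).2)

end Polynomial

theorem finAbs_eq_adicAbv {L : Type*} [Field L] [NumberField L] (v : HeightOneSpectrum (𝓞 L)) :
    finAbs v = NumberField.HeightOneSpectrum.adicAbv L v := by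
  ext x
  rw [NumberField.HeightOneSpectrum.adicAbv_def]
  by_cases hx : x = 0
  · simp [finAbs, hx]
  · rw [finAbs, if_neg hx, WithZeroMulInt.toNNReal_neg_apply _ ((Valuation.ne_zero_iff _).2 hx),
      intValOn, dif_neg hx, neg_neg, NNReal.coe_zpow]
    rfl

theorem stmt_6_general {L : Type*} [Field L] [NumberField L]
    (d : ℕ) (F : L[X]) (hdeg : F.natDegree ≤ d)
    (A B : ℤ) (D : ℕ) (hD : (D : ℤ) = B - A)
    (v : HeightOneSpectrum (𝓞 L)) :
    {x : ℤ | x ∈ Set.Icc A B ∧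
        finAbs v (F.eval ((x : ℤ) : L)) < finAbs v (D ! : L) * polyNorm (finAbs v) F}.ncard
      ≤ d := by
  rw [finAbs_eq_adicAbv, polyNorm_eq_gaussNorm]
  exact (ncard_setOf_lt_factorial_mul_gaussNorm_le
    (NumberField.HeightOneSpectrum.isNonarchimedean_adicAbv L v) F hD).trans hdeg

/-- Let `F ∈ L[X]` of degree at most `d ≥ 1`, let `A ≤ B` be integers with
`D = B − A`, and let `v` be a finite place of `L`. Then the number of integers `x ∈ [A, B]`
with `|F(x)|_v < |D!|_v · |F|_v` is at most `d`. (The defining inequality is stated,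
equivalently, after raising both sides to the local degree `d_v`, i.e. using `finAbs`.) -/
theorem stmt_6 {L : Type*} [Field L] [NumberField L]
    (d : ℕ) (hd : 1 ≤ d) (F : L[X]) (hdeg : F.natDegree ≤ d)
    (A B : ℤ) (hAB : A ≤ B) (D : ℕ) (hD : (D : ℤ) = B - A)
    (v : HeightOneSpectrum (𝓞 L)) :
    {x : ℤ | x ∈ Set.Icc A B ∧
        finAbs v (F.eval ((x : ℤ) : L)) < finAbs v (D ! : L) * polyNorm (finAbs v) F}.ncard
      ≤ d :=
  stmt_6_general d F hdeg A B D hD v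
end

section
/- Let L be a number field with ring of integers Z_L, and let P, Q ∈ Z_L[X] be nonzero polynomials of degrees d_P ≥ 1 and d_Q ≥ 1 respectively. Write s = d_P + d_Q and let R = Res(P, Q) ∈ Z_L be the resultant of P and Q. Then h(R) ≤ d_Q·h(P) + d_P·h(Q) + (s/2)·log(s). -/
open NumberField Polynomial IsDedekindDomain Nat
open scoped Classical

/-- The Sylvester matrix of two polynomials `P`, `Q` of degrees `dP`, `dQ`: a square matrix of
size `dQ + dP` whose first `dQ` rows contain the (descending) coefficients of `P` shifted, and
whose last `dP` rows contain the coefficients of `Q` shifted. -/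
noncomputable def sylvester {R : Type*} [CommRing R] (P Q : Polynomial R) (dP dQ : ℕ) :
    Matrix (Fin dQ ⊕ Fin dP) (Fin (dQ + dP)) R :=
  Matrix.of fun i j =>
    match i with
    | Sum.inl k =>
        if (k : ℕ) ≤ (j : ℕ) ∧ (j : ℕ) ≤ (k : ℕ) + dP then P.coeff (dP + k - j) else 0
    | Sum.inr k =>
        if (k : ℕ) ≤ (j : ℕ) ∧ (j : ℕ) ≤ (k : ℕ) + dQ then Q.coeff (dQ + k - j) else 0

/-- The resultant `Res(P, Q)`: the determinant of the Sylvester matrix of `P` and `Q`. -/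
noncomputable def resultant {R : Type*} [CommRing R] (P Q : Polynomial R) : R :=
  Matrix.det ((_root_.sylvester P Q P.natDegree Q.natDegree).submatrix (⇑finSumFinEquiv.symm) id)

/-!
At a finite place the coefficients of `P`, `Q` and `Res(P, Q)` are integral, so all local
terms of the three heights vanish. At an infinite place `w`, embed `𝓞 L` into `ℂ`: the Sylvester
matrix has `dQ` rows with entries bounded by `|P|_w` and `dP` rows bounded by `|Q|_w`, so
Hadamard's inequality gives `|Res(P, Q)|_w ≤ s^{s/2} |P|_w^{dQ} |Q|_w^{dP}`; that inequality
itself is AM-GM for the eigenvalues of `A Aᴴ`, whose product is `|det A|²` and whose sum is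
`Σ |A i j|²`. Averaging `log max 1` of this bound over the infinite places with weights
`d_w / d_L`, which sum to `1`, gives the theorem.
-/

open Finset

theorem Real.prod_le_sum_div_card_pow {ι : Type*} (s : Finset ι) (z : ι → ℝ)
    (hz : ∀ i ∈ s, 0 ≤ z i) : ∏ i ∈ s, z i ≤ ((∑ i ∈ s, z i) / #s) ^ #s := by
  rcases s.eq_empty_or_nonempty with rfl | hs
  · simp
  have hcard : (0 : ℝ) < #s := mod_cast hs.card_pos
  have amgm := Real.geom_mean_le_arith_mean_weighted s (fun _ ↦ (#s : ℝ)⁻¹) z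
    (fun _ _ ↦ by positivity) (by simp [hcard.ne']) hz
  rw [← Finset.mul_sum, inv_mul_eq_div] at amgm
  calc ∏ i ∈ s, z i = (∏ i ∈ s, z i ^ (#s : ℝ)⁻¹) ^ #s := by
        rw [← Finset.prod_pow]
        refine Finset.prod_congr rfl fun i hi ↦ ?_
        rw [← Real.rpow_mul_natCast (hz i hi), inv_mul_cancel₀ hcard.ne', Real.rpow_one]
    _ ≤ _ := by gcongr; exact Finset.prod_nonneg fun i hi ↦ Real.rpow_nonneg (hz i hi) _

namespace Matrix
open scoped ComplexOrder
variable {𝕜 ι : Type*} [RCLike 𝕜] [Fintype ι] [DecidableEq ι]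

theorem norm_det_sq_le_frobenius_div_card_pow (A : Matrix ι ι 𝕜) :
    ‖A.det‖ ^ 2 ≤ ((∑ i, ∑ j, ‖A i j‖ ^ 2) / Fintype.card ι) ^ Fintype.card ι := by
  have hM : (A * Aᴴ).PosSemidef := posSemidef_self_mul_conjTranspose A
  have hH : (A * Aᴴ).IsHermitian := hM.isHermitian
  have hdet : ‖A.det‖ ^ 2 = ∏ i, hH.eigenvalues i := by
    have := hH.det_eq_prod_eigenvalues
    rw [det_mul, det_conjTranspose, RCLike.star_def, RCLike.mul_conj] at this
    exact_mod_cast this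
  have htrace : ∑ i, ∑ j, ‖A i j‖ ^ 2 = ∑ i, hH.eigenvalues i := by
    have := hH.trace_eq_sum_eigenvalues
    simp only [trace, diag, mul_apply, conjTranspose_apply, RCLike.star_def,
      RCLike.mul_conj] at this
    exact_mod_cast this
  rw [hdet, htrace]
  exact Real.prod_le_sum_div_card_pow _ _ fun i _ ↦ hM.eigenvalues_nonneg i

theorem norm_det_sq_le_card_pow_of_norm_le_one (A : Matrix ι ι 𝕜)
    (hA : ∀ i j, ‖A i j‖ ≤ 1) :
    ‖A.det‖ ^ 2 ≤ (Fintype.card ι : ℝ) ^ Fintype.card ι := by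
  refine (norm_det_sq_le_frobenius_div_card_pow A).trans (pow_le_pow_left₀ (by positivity) ?_ _)
  calc (∑ i, ∑ j, ‖A i j‖ ^ 2) / Fintype.card ι
      ≤ (∑ _i : ι, ∑ _j : ι, (1 : ℝ)) / Fintype.card ι := by
        gcongr with i _ j _
        exact pow_le_one₀ (norm_nonneg _) (hA i j)
    _ = Fintype.card ι := by simp [mul_self_div_self]

theorem norm_det_le_sqrt_card_pow_mul_prod (A : Matrix ι ι 𝕜) (r : ι → ℝ)
    (hA : ∀ i j, ‖A i j‖ ≤ r i) :
    ‖A.det‖ ≤ √((Fintype.card ι : ℝ) ^ Fintype.card ι) * ∏ i, r i := by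
  have hr : ∀ i, 0 ≤ r i := fun i ↦ (norm_nonneg _).trans (hA i i)
  set B : Matrix ι ι 𝕜 := of fun i j ↦ A i j / r i
  -- a row with `r i = 0` vanishes, so it does not matter that `B` has junk entries there
  have hAB : A = diagonal (fun i ↦ (r i : 𝕜)) * B := by
    ext i j
    simp only [B, diagonal_mul, of_apply]
    rw [mul_div_cancel_of_imp']
    intro h
    exact norm_le_zero_iff.mp ((hA i j).trans_eq (by exact_mod_cast h))
  have hB : ∀ i j, ‖B i j‖ ≤ 1 := by
    intro i j
    simp only [B, of_apply]
    rw [norm_div, RCLike.norm_ofReal, abs_of_nonneg (hr i)]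
    exact div_le_one_of_le₀ (hA i j) (hr i)
  rw [hAB, det_mul, det_diagonal, norm_mul, norm_prod, mul_comm]
  simp only [RCLike.norm_ofReal, abs_of_nonneg (hr _)]
  exact mul_le_mul_of_nonneg_right
    (Real.le_sqrt_of_sq_le (norm_det_sq_le_card_pow_of_norm_le_one B hB))
    (prod_nonneg fun i _ ↦ hr i)

end Matrix

theorem le_polyNorm {L : Type*} [Field L] (v : L → ℝ) (P : L[X]) (i : ℕ) :
    v (P.coeff i) ≤ polyNorm v P :=
  le_ciSup (f := fun i ↦ v (P.coeff i))
    (by simpa only [Set.range_comp'] using (P.finite_range_coeff.image v).bddAbove) i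

theorem finsum_log_max_one_eq_zero {α : Type*} (f : α → ℝ) (hf : ∀ a, f a ≤ 1) :
    ∑ᶠ a, Real.log (max 1 (f a)) = 0 :=
  finsum_eq_zero_of_forall_eq_zero fun a ↦ by rw [max_eq_left (hf a), Real.log_one]

theorem norm_resultant_le {R 𝕜 : Type*} [CommRing R] [RCLike 𝕜] (τ : R →+* 𝕜)
    (P Q : R[X]) {BP BQ : ℝ} (hP : ∀ i, ‖τ (P.coeff i)‖ ≤ BP)
    (hQ : ∀ i, ‖τ (Q.coeff i)‖ ≤ BQ) :
    ‖τ (_root_.resultant P Q)‖ ≤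
      √(((P.natDegree + Q.natDegree : ℕ) : ℝ) ^ (P.natDegree + Q.natDegree)) *
        BP ^ Q.natDegree * BQ ^ P.natDegree := by
  set r : Fin (Q.natDegree + P.natDegree) → ℝ :=
    fun i ↦ Sum.elim (fun _ ↦ BP) (fun _ ↦ BQ) (finSumFinEquiv.symm i)
  have hrow : ∀ i j, ‖((_root_.sylvester P Q P.natDegree Q.natDegree).submatrix
      finSumFinEquiv.symm id).map τ i j‖ ≤ r i := by
    intro i j
    simp only [r, Matrix.map_apply, Matrix.submatrix_apply, id_eq]
    rcases finSumFinEquiv.symm i with k | k <;>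
      simp only [_root_.sylvester, Matrix.of_apply, Sum.elim_inl, Sum.elim_inr] <;> split_ifs
    exacts [hP _, by simpa using (norm_nonneg _).trans (hP 0), hQ _,
      by simpa using (norm_nonneg _).trans (hQ 0)]
  have hprod : ∏ i, r i = BP ^ Q.natDegree * BQ ^ P.natDegree := by
    simp [r, ← Equiv.prod_comp finSumFinEquiv, Fintype.prod_sum_type]
  have hdet := Matrix.norm_det_le_sqrt_card_pow_mul_prod _ r hrow
  rw [Fintype.card_fin, hprod] at hdet
  rwa [_root_.resultant, RingHom.map_det, RingHom.mapMatrix_apply, add_comm P.natDegree,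
    mul_assoc]

section NumberField
variable {L : Type*} [Field L] [NumberField L]

theorem intValOn_coe_nonneg (v : HeightOneSpectrum (𝓞 L)) (x : 𝓞 L) :
    0 ≤ intValOn v (x : L) := by
  rw [intValOn]
  split_ifs with h
  · rfl
  · have hle : WithZero.unzero ((v.valuation L).ne_zero_iff.mpr h) ≤ 1 := by
      rw [← WithZero.coe_le_coe, WithZero.coe_unzero, WithZero.coe_one,
        RingOfIntegers.coe_eq_algebraMap]
      exact v.valuation_le_one x
    exact neg_nonneg.mpr hle

theorem finAbs_coe_le_one (v : HeightOneSpectrum (𝓞 L)) (x : 𝓞 L) :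
    finAbs v (x : L) ≤ 1 := by
  rw [finAbs]
  split_ifs
  · exact zero_le_one
  · have hnorm : 1 ≤ Ideal.absNorm v.asIdeal :=
      Nat.one_le_iff_ne_zero.mpr (Ideal.absNorm_eq_zero_iff.not.mpr v.ne_bot)
    exact zpow_le_one_of_nonpos₀ (mod_cast hnorm) (neg_nonpos.mpr (intValOn_coe_nonneg v x))

theorem polyNorm_finAbs_map_le_one (v : HeightOneSpectrum (𝓞 L)) (P : (𝓞 L)[X]) :
    polyNorm (finAbs v) (P.map (algebraMap (𝓞 L) L)) ≤ 1 :=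
  ciSup_le fun i ↦ by
    rw [coeff_map, ← RingOfIntegers.coe_eq_algebraMap]
    exact finAbs_coe_le_one v _

end NumberField

theorem NumberField.InfinitePlace.log_max_one_resultant_le {L : Type*} [Field L]
    (w : InfinitePlace L) (P Q : (𝓞 L)[X]) :
    Real.log (max 1 (w ((_root_.resultant P Q : 𝓞 L) : L))) ≤
      Q.natDegree * Real.log (max 1 (polyNorm w (P.map (algebraMap (𝓞 L) L))))
      + P.natDegree * Real.log (max 1 (polyNorm w (Q.map (algebraMap (𝓞 L) L))))
      + ((P.natDegree + Q.natDegree : ℕ) / 2) * Real.log (P.natDegree + Q.natDegree : ℕ) := by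
  set τ : 𝓞 L →+* ℂ := w.embedding.comp (algebraMap (𝓞 L) L)
  have hτ : ∀ x : 𝓞 L, ‖τ x‖ = w x := fun x ↦ w.norm_embedding_eq x
  set NP := max 1 (polyNorm w (P.map (algebraMap (𝓞 L) L)))
  set NQ := max 1 (polyNorm w (Q.map (algebraMap (𝓞 L) L)))
  set n := P.natDegree + Q.natDegree
  have hcoeff : ∀ (F : (𝓞 L)[X]) i,
      ‖τ (F.coeff i)‖ ≤ max 1 (polyNorm w (F.map (algebraMap (𝓞 L) L))) := by
    intro F i
    rw [hτ, RingOfIntegers.coe_eq_algebraMap, ← coeff_map]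
    exact (le_polyNorm _ _ i).trans (le_max_right _ _)
  have hres := norm_resultant_le τ P Q (hcoeff P) (hcoeff Q)
  rw [hτ] at hres
  have hsqrt : 1 ≤ √((n : ℝ) ^ n) := by
    rcases n.eq_zero_or_pos with hn | hn
    · simp [hn]
    · exact Real.one_le_sqrt.mpr (one_le_pow₀ (mod_cast hn))
  have hV : 1 ≤ √((n : ℝ) ^ n) * NP ^ Q.natDegree * NQ ^ P.natDegree :=
    one_le_mul_of_one_le_of_one_le (one_le_mul_of_one_le_of_one_le hsqrt
      (one_le_pow₀ (le_max_left _ _))) (one_le_pow₀ (le_max_left _ _))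
  calc Real.log (max 1 (w ((_root_.resultant P Q : 𝓞 L) : L)))
      ≤ Real.log (√((n : ℝ) ^ n) * NP ^ Q.natDegree * NQ ^ P.natDegree) :=
        Real.log_le_log (by positivity) (max_le hV hres)
    _ = _ := by
        rw [Real.log_mul (by positivity) (by positivity),
          Real.log_mul (by positivity) (by positivity), Real.log_sqrt (by positivity),
          Real.log_pow, Real.log_pow, Real.log_pow]
        ring

theorem stmt_12_general {L : Type*} [Field L] [NumberField L]
    (P Q : Polynomial (𝓞 L))
    (dP dQ : ℕ) (hdP : P.natDegree = dP) (hdQ : Q.natDegree = dQ)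
    (s : ℕ) (hs : s = dP + dQ) (R : 𝓞 L) (hR : R = _root_.resultant P Q) :
    elemHeight ((R : 𝓞 L) : L) ≤
      (dQ : ℝ) * polyHeight (P.map (algebraMap (𝓞 L) L))
      + (dP : ℝ) * polyHeight (Q.map (algebraMap (𝓞 L) L))
      + ((s : ℝ) / 2) * Real.log (s : ℝ) := by
  subst hdP hdQ hs hR
  have hfin : ∀ F : (𝓞 L)[X],
      ∑ᶠ v, Real.log (max 1 (polyNorm (finAbs v) (F.map (algebraMap (𝓞 L) L)))) = 0 :=
    fun F ↦ finsum_log_max_one_eq_zero _ fun v ↦ polyNorm_finAbs_map_le_one v F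
  simp only [elemHeight, polyHeight, hfin,
    finsum_log_max_one_eq_zero _ fun v ↦ finAbs_coe_le_one v _, zero_add]
  set c : ℝ :=
    ((P.natDegree + Q.natDegree : ℕ) / 2) * Real.log (P.natDegree + Q.natDegree : ℕ)
  have hc : c = 1 / Module.finrank ℚ L * ∑ w : InfinitePlace L, (w.mult : ℝ) * c := by
    have hd : (0 : ℝ) < Module.finrank ℚ L := mod_cast Module.finrank_pos
    rw [← Finset.sum_mul, ← Nat.cast_sum, InfinitePlace.sum_mult_eq]
    field_simp
  rw [hc, mul_left_comm (Q.natDegree : ℝ), mul_left_comm (P.natDegree : ℝ), ← mul_add,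
    ← mul_add]
  gcongr
  simp only [Finset.mul_sum, ← Finset.sum_add_distrib]
  refine Finset.sum_le_sum fun w _ ↦ ?_
  have hw := mul_le_mul_of_nonneg_left (w.log_max_one_resultant_le P Q) (Nat.cast_nonneg' w.mult)
  exact hw.trans_eq (by ring)

/-- Let `P, Q ∈ Z_L[X]` be nonzero polynomials of degrees `dP ≥ 1` and
`dQ ≥ 1`, let `s = dP + dQ` and let `R = Res(P, Q) ∈ Z_L` be the resultant. Then
`h(R) ≤ dQ·h(P) + dP·h(Q) + (s/2)·log s`. -/
theorem stmt_12 {L : Type*} [Field L] [NumberField L]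
    (P Q : Polynomial (𝓞 L)) (hP : P ≠ 0) (hQ : Q ≠ 0)
    (dP dQ : ℕ) (hdP : P.natDegree = dP) (hdQ : Q.natDegree = dQ)
    (hdP1 : 1 ≤ dP) (hdQ1 : 1 ≤ dQ)
    (s : ℕ) (hs : s = dP + dQ) (R : 𝓞 L) (hR : R = _root_.resultant P Q) :
    elemHeight ((R : 𝓞 L) : L) ≤
      (dQ : ℝ) * polyHeight (P.map (algebraMap (𝓞 L) L))
      + (dP : ℝ) * polyHeight (Q.map (algebraMap (𝓞 L) L))
      + ((s : ℝ) / 2) * Real.log (s : ℝ) :=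
  stmt_12_general P Q dP dQ hdP hdQ s hs R hR
end
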